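/- arXiv:math/0508095 — 5 statements merged into one kernel-verified Lean document; each statement's English description precedes it below -/
import Mathlib

section
/- Let $l_1,\dots,l_d$ be linear forms on $\mathbb{C}^n$ ($n\ge 2$) in general position (every subfamily of at most $n$ of them is linearly independent). For $q\ge 0$ let $r_q$ denote the dimension of the linear span of $l_1^q,\dots,l_d^q$ in the space of homogeneous polynomials of degree $q$. Then for every $q\ge 0$ one has $r_{q+1} \ge \min(d,\, r_q + (n-1))$. -/
/-!
Let `K_q ⊆ ℂ^d` be the space of linear relations `∑ c_α l_α^q = 0`, so that `r_q = d - dim K_q`.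
Differentiating a relation of degree `q + 1` in a direction `v` yields the relation
`c ⊙ l(v) = (c_α l_α(v))_α` of degree `q`. By general position, a nonzero `c ∈ K_{q+1}` has more
than `n` nonzero coordinates, so `v ↦ c ⊙ l(v)` is injective, and induction on `dim D` shows that
the products `c ⊙ l(v)` with `c ∈ D` span a space of dimension at least `dim D + n - 1` whenever
`0 ≠ D ⊆ K_{q+1}`. Hence `dim K_q ≥ dim K_{q+1} + n - 1` as soon as `K_{q+1} ≠ 0`.
-/

open Module Submodule Polynomial

variable {K V : Type*} [Field K] [AddCommGroup V] [Module K V]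

theorem LinearIndependent.surjective_pi {s : Type*} [Finite s] {l : s → V →ₗ[K] K}
    (hl : LinearIndependent K l) : Function.Surjective (LinearMap.pi l) := by
  have hfun : LinearIndependent K fun α x => l α x :=
    hl.map' (LinearMap.ltoFun K V K K) (LinearMap.ker_eq_bot.2 DFunLike.coe_injective)
  rw [← LinearMap.range_eq_top, ← span_flip_eq_top_iff_linearIndependent.2 hfun]
  exact (span_eq (LinearMap.range (LinearMap.pi l))).symm

theorem LinearIndependent.injective_pi [FiniteDimensional K V] {s : Type*} [Fintype s]
    {l : s → V →ₗ[K] K} (hl : LinearIndependent K l) (hcard : Fintype.card s = finrank K V) :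
    Function.Injective (LinearMap.pi l) :=
  (LinearMap.injective_iff_surjective_of_finrank_eq_finrank (by simp [hcard])).2 hl.surjective_pi

section

variable {ι : Type*} (l : ι → V →ₗ[K] K)

noncomputable def mulPi : (ι → K) →ₗ[K] V →ₗ[K] ι → K :=
  (LinearMap.mul K (ι → K)).compl₂ (LinearMap.pi l)

theorem mulPi_apply (c : ι → K) (v : V) (α : ι) : mulPi l c v α = c α * l α v := rfl

variable [Fintype ι]

noncomputable def powerCombination (q : ℕ) : (ι → K) →ₗ[K] V → K :=
  Fintype.linearCombination K fun α x => l α x ^ q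

theorem powerCombination_apply (q : ℕ) (c : ι → K) (x : V) :
    powerCombination l q c x = ∑ α, c α * l α x ^ q := by
  simp [powerCombination, Fintype.linearCombination_apply, Finset.sum_apply]

theorem range_powerCombination (q : ℕ) :
    LinearMap.range (powerCombination l q) = span K (Set.range fun α x => l α x ^ q) :=
  Fintype.range_linearCombination K _

theorem eq_zero_of_powerCombination_eq_zero {q : ℕ} (hq : q ≠ 0) {s : Finset ι}
    (hs : LinearIndependent K fun α : s => l α) {c : ι → K} (hc : ∀ α ∉ s, c α = 0)
    (h : powerCombination l q c = 0) : c = 0 := by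
  classical
  funext β
  by_cases hβ : β ∉ s
  · exact hc β hβ
  rw [not_not] at hβ
  obtain ⟨w, hw⟩ := hs.surjective_pi (Pi.single ⟨β, hβ⟩ 1)
  have hlw : ∀ α (hα : α ∈ s), l α w = if α = β then 1 else 0 := fun α hα => by
    simpa [Pi.single_apply, Subtype.ext_iff] using congrFun hw ⟨α, hα⟩
  have hcw := congrFun h w
  rw [powerCombination_apply, Finset.sum_eq_single β] at hcw
  · simpa [hlw β hβ] using hcw
  · intro α _ hαβ
    by_cases hα : α ∈ s
    · simp [hlw α hα, hαβ, hq]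
    · simp [hc α hα]
  · simp

theorem mulPi_mem_ker_powerCombination [CharZero K] {q : ℕ} {c : ι → K}
    (hc : c ∈ LinearMap.ker (powerCombination l (q + 1))) (v : V) :
    mulPi l c v ∈ LinearMap.ker (powerCombination l q) := by
  rw [LinearMap.mem_ker] at hc ⊢
  funext x
  -- `t ↦ ∑ c_α (l_α (x + t v))^(q+1)` vanishes identically, hence so does its derivative at `0`
  set p : K[X] := ∑ α, C (c α) * (C (l α x) + C (l α v) * X) ^ (q + 1)
  have hp : p = 0 := Polynomial.funext fun t => by
    simpa [p, eval_finsetSum, powerCombination_apply, mul_comm t] using congrFun hc (x + t • v)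
  have hp' := congrArg (fun p : K[X] => (derivative p).eval 0) hp
  simp only [p, derivative_sum, derivative_mul, derivative_C, derivative_pow, derivative_add,
    derivative_X, eval_finsetSum, eval_add, eval_mul, eval_pow, eval_C, eval_X,
    eval_zero, derivative_zero, zero_mul, zero_add, mul_zero, add_zero, mul_one,
    Nat.add_sub_cancel] at hp'
  have hsum : ((q : K) + 1) * ∑ α, c α * l α v * l α x ^ q = 0 := by
    rw [Finset.mul_sum, ← hp']
    exact Finset.sum_congr rfl fun α _ => by push_cast; ring
  simpa [powerCombination_apply, mulPi_apply] using
    (mul_eq_zero.1 hsum).resolve_left (Nat.cast_add_one_ne_zero q)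

theorem injective_mulPi_of_mem_ker_powerCombination [FiniteDimensional K V]
    (hgen : ∀ s : Finset ι, s.card ≤ finrank K V → LinearIndependent K fun α : s => l α)
    {q : ℕ} (hq : q ≠ 0) {c : ι → K} (hc : c ∈ LinearMap.ker (powerCombination l q))
    (hc0 : c ≠ 0) : Function.Injective (mulPi l c) := by
  classical
  set supp := Finset.univ.filter fun α => c α ≠ 0
  have hsupp : finrank K V < supp.card := by
    by_contra! hle
    exact hc0 <| eq_zero_of_powerCombination_eq_zero l hq (hgen supp hle)
      (fun α hα => by simpa [supp] using hα) hc
  obtain ⟨t, hts, htcard⟩ := Finset.exists_subset_card_eq hsupp.le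
  have hpi := (hgen t htcard.le).injective_pi (by simpa using htcard)
  rw [injective_iff_map_eq_zero] at hpi ⊢
  refine fun v hv => hpi v (funext fun α => ?_)
  have hα : c α ≠ 0 := by simpa [supp] using hts α.2
  simpa [mulPi_apply, hα] using congrFun hv α

theorem add_finrank_le_finrank_map₂_mulPi [FiniteDimensional K V] [Nontrivial V] (k : ℕ) :
    ∀ D : Submodule K (ι → K), finrank K D = k + 1 →
      (∀ c ∈ D, c ≠ 0 → Function.Injective (mulPi l c)) →
      k + finrank K V ≤ finrank K (map₂ (mulPi l) D ⊤) := by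
  induction k with
  | zero =>
    intro D hD hinj
    obtain ⟨c, hcD, hc0⟩ := exists_mem_ne_zero_of_ne_bot (p := D) (by rintro rfl; simp at hD)
    have hrange : LinearMap.range (mulPi l c) ≤ map₂ (mulPi l) D ⊤ := by
      rintro _ ⟨v, rfl⟩
      exact apply_mem_map₂ _ hcD mem_top
    simpa [LinearMap.finrank_range_of_inj (hinj c hcD hc0)] using finrank_mono hrange
  | succ k ih =>
    intro D hD hinj
    obtain ⟨c, hcD, hc0⟩ := exists_mem_ne_zero_of_ne_bot (p := D) (by rintro rfl; simp at hD)
    obtain ⟨v, hv⟩ := exists_ne (0 : V)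
    obtain ⟨j, hj⟩ : ∃ j, mulPi l c v j ≠ 0 :=
      Function.ne_iff.1 ((injective_iff_map_eq_zero' _).1 (hinj c hcD hc0) v |>.not.2 hv)
    -- `D'` is the hyperplane of `D` cut out by the `j`-th coordinate; all of `map₂ D'` vanishes
    -- at `j`, while `c ⊙ l(v) ∈ map₂ D` does not.
    set f : Dual K D := LinearMap.proj j ∘ₗ D.subtype
    have hf : f ≠ 0 := fun h => by
      have : c j = 0 := congrArg (fun g : Dual K D => g ⟨c, hcD⟩) h
      simp [mulPi_apply, this] at hj
    set D' := (LinearMap.ker f).map D.subtype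
    have hD' : finrank K D' = k + 1 := by
      have := Dual.finrank_ker_add_one_of_ne_zero hf
      rw [finrank_map_subtype_eq]
      omega
    have hle : map₂ (mulPi l) D' ⊤ ≤ LinearMap.ker (LinearMap.proj j) := by
      refine map₂_le.2 fun c' hc' v' _ => ?_
      obtain ⟨c', hc', rfl⟩ := hc'
      simp_all [mulPi_apply, f]
    have hlt : map₂ (mulPi l) D' ⊤ < map₂ (mulPi l) D ⊤ :=
      lt_of_le_of_ne (map₂_le_map₂_left (map_subtype_le _ _))
        fun h => hj (hle (h ▸ apply_mem_map₂ _ hcD mem_top))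
    have := ih D' hD' fun c' hc' => hinj c' (map_subtype_le _ _ hc')
    have := finrank_lt_finrank_of_lt hlt
    omega

theorem min_le_finrank_range_powerCombination_succ [CharZero K] [FiniteDimensional K V]
    [Nontrivial V]
    (hgen : ∀ s : Finset ι, s.card ≤ finrank K V → LinearIndependent K fun α : s => l α)
    (q : ℕ) :
    min (Fintype.card ι) (finrank K (LinearMap.range (powerCombination l q)) + (finrank K V - 1))
      ≤ finrank K (LinearMap.range (powerCombination l (q + 1))) := by
  have hrank := fun m => (powerCombination l m).finrank_range_add_finrank_ker
  simp only [finrank_fintype_fun_eq_card] at hrank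
  have hq := hrank q
  have hq₁ := hrank (q + 1)
  rcases Nat.eq_zero_or_pos (finrank K (LinearMap.ker (powerCombination l (q + 1)))) with h | h
  · omega
  obtain ⟨k, hk⟩ := Nat.exists_eq_add_one_of_ne_zero h.ne'
  have hgrowth := add_finrank_le_finrank_map₂_mulPi l k _ hk fun c hc hc0 =>
    injective_mulPi_of_mem_ker_powerCombination l hgen q.succ_ne_zero hc hc0
  have hle : map₂ (mulPi l) (LinearMap.ker (powerCombination l (q + 1))) ⊤ ≤
      LinearMap.ker (powerCombination l q) :=
    map₂_le.2 fun c hc v _ => mulPi_mem_ker_powerCombination l hc v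
  have := finrank_mono hle
  have : 0 < finrank K V := finrank_pos
  omega

end

theorem stmt0_general (n d : ℕ) (hn : 2 ≤ n)
    (l : Fin d → ((Fin n → ℂ) →ₗ[ℂ] ℂ))
    (hgen : ∀ s : Finset (Fin d), s.card ≤ n →
      LinearIndependent ℂ (fun α : s => l α))
    (r : ℕ → ℕ)
    (hr : ∀ q : ℕ, r q = Module.finrank ℂ
      (Submodule.span ℂ (Set.range fun α : Fin d => fun x : Fin n → ℂ => (l α x) ^ q))) :
    ∀ q : ℕ, min d (r q + (n - 1)) ≤ r (q + 1) := by
  intro q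
  have : NeZero n := ⟨by omega⟩
  rw [hr, hr, ← range_powerCombination, ← range_powerCombination]
  simpa using min_le_finrank_range_powerCombination_succ l (by simpa using hgen) q

/-- For linear forms in general position on ℂ^n (n ≥ 2), the rank r_q of the
span of the q-th powers satisfies r_{q+1} ≥ min(d, r_q + (n-1)). -/
theorem stmt0 (n d : ℕ) (hn : 2 ≤ n) (hd : 1 ≤ d)
    (l : Fin d → ((Fin n → ℂ) →ₗ[ℂ] ℂ))
    (hgen : ∀ s : Finset (Fin d), s.card ≤ n →
      LinearIndependent ℂ (fun α : s => l α))
    (r : ℕ → ℕ)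
    (hr : ∀ q : ℕ, r q = Module.finrank ℂ
      (Submodule.span ℂ (Set.range fun α : Fin d => fun x : Fin n → ℂ => (l α x) ^ q))) :
    ∀ q : ℕ, min d (r q + (n - 1)) ≤ r (q + 1) :=
  stmt0_general n d hn l hgen r hr
end

section
/- Let $l_1,\dots,l_d$ be linear forms on $\mathbb{C}^n$ ($n\ge 2$) in general position. Then for every $q\ge 0$, the dimension $r_q$ of the span of $l_1^q,\dots,l_d^q$ satisfies $r_q \ge \min(d,\, q(n-1)+1)$. -/
/-!
By induction on `q`, the `q`-th powers of any at most `q * (n - 1) + 1` of the forms are linearly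
independent. Given a relation `∑ α ∈ s, g α * l α ^ q = 0` and `α₀ ∈ s`, put at most `n - 1`
other members of `s` into a block `B`, so that `s \ B` has at most `(q - 1) * (n - 1) + 1`
elements. General position gives a direction `v` with `l α₀ v = 1` and `l β v = 0` for `β ∈ B`;
differentiating the relation along `v` gives a relation among the `(q - 1)`-th powers of the
forms in `s \ B`, with coefficients `q * g α * l α v`, so `g α₀ = 0` by induction.
-/

open Finset

section LinearIndependence

variable {K V ι : Type*} [Field K] [AddCommGroup V] [Module K V]

theorem LinearIndependent.surjective_pi_s1 [Finite ι] {φ : ι → Module.Dual K V} (h : LinearIndependent K φ) :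
    Function.Surjective (LinearMap.pi φ) := by
  have hfun : LinearIndependent K (fun i => ⇑(φ i)) :=
    h.map' (LinearMap.ltoFun K V K K) (LinearMap.ker_eq_bot.mpr DFunLike.coe_injective)
  rw [← LinearMap.range_eq_top, ← span_flip_eq_top_iff_linearIndependent.mpr hfun,
    ← Submodule.span_eq (LinearMap.range _)]
  rfl

theorem exists_apply_eq_one_of_linearIndepOn (φ : ι → Module.Dual K V) {t : Finset ι}
    (ht : LinearIndepOn K φ t) {α₀ : ι} (hα₀ : α₀ ∈ t) :
    ∃ v, φ α₀ v = 1 ∧ ∀ β ∈ t, β ≠ α₀ → φ β v = 0 := by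
  classical
  obtain ⟨v, hv⟩ := LinearIndependent.surjective_pi_s1 ht (Pi.single ⟨α₀, hα₀⟩ 1)
  refine ⟨v, by simpa using congr_fun hv ⟨α₀, hα₀⟩, fun β hβ hne => ?_⟩
  simpa [Pi.single_apply, hne] using congr_fun hv ⟨β, hβ⟩

theorem min_card_le_finrank_span [Fintype ι] {v : ι → V} {m : ℕ} (h : ∀ s : Finset ι, s.card ≤ m → LinearIndepOn K v s) :
    min (Fintype.card ι) m ≤ Module.finrank K (Submodule.span K (Set.range v)) := by
  obtain ⟨s, -, hs⟩ := exists_subset_card_eq (s := (univ : Finset ι)) (min_le_left _ m)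
  have hli := h s (hs ▸ min_le_right _ m)
  have := FiniteDimensional.span_of_finite K (Set.finite_range v)
  calc min (Fintype.card ι) m = Fintype.card s := by simp [hs]
    _ ≤ (Set.range fun i : s => v i).finrank K := linearIndependent_iff_card_le_finrank_span.mp hli
    _ ≤ _ := Submodule.finrank_mono (Submodule.span_mono (Set.range_comp_subset_range _ v))

end LinearIndependence

section PowersOfLinearForms

variable {𝕜 V ι : Type*} [NontriviallyNormedField 𝕜] [AddCommGroup V] [Module 𝕜 V]

theorem sum_mul_pow_eq_zero_of_sum_mul_pow_succ_eq_zero (φ : ι → Module.Dual 𝕜 V)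
    (s : Finset ι) (g : ι → 𝕜) {q : ℕ} (h : ∀ x, ∑ α ∈ s, g α * φ α x ^ (q + 1) = 0) (v x : V) :
    ∑ α ∈ s, g α * ((q + 1) * φ α v) * φ α x ^ q = 0 := by
  have hderiv : HasDerivAt (fun t : 𝕜 => ∑ α ∈ s, g α * (φ α x + t * φ α v) ^ (q + 1))
      (∑ α ∈ s, g α * ((q + 1) * φ α x ^ q * φ α v)) 0 := by
    refine HasDerivAt.fun_sum fun α _ => ?_
    refine ((((hasDerivAt_mul_const (φ α v)).const_add (φ α x)).fun_pow (q + 1)).const_mul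
      (g α)).congr_deriv ?_
    simp
  have hzero : (fun t : 𝕜 => ∑ α ∈ s, g α * (φ α x + t * φ α v) ^ (q + 1)) = fun _ => 0 := by
    funext t
    simpa using h (x + t • v)
  rw [hzero] at hderiv
  rw [(hasDerivAt_const (0 : 𝕜) (0 : 𝕜)).unique hderiv]
  exact sum_congr rfl fun α _ => by ring

variable [CharZero 𝕜]

theorem eq_zero_of_sum_mul_pow_eq_zero {n : ℕ} (hn : 1 ≤ n) (φ : ι → Module.Dual 𝕜 V)
    (hgen : ∀ s : Finset ι, s.card ≤ n → LinearIndepOn 𝕜 φ s) {q : ℕ} {s : Finset ι}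
    (hs : s.card ≤ q * (n - 1) + 1) {g : ι → 𝕜} (h : ∀ x, ∑ α ∈ s, g α * φ α x ^ q = 0) :
    ∀ α ∈ s, g α = 0 := by
  classical
  induction q generalizing s g with
  | zero =>
    intro α hα
    have hs_eq : s = {α} :=
      eq_singleton_iff_unique_mem.mpr ⟨hα, fun β hβ => card_le_one.mp (by simpa using hs) β hβ α hα⟩
    simpa [hs_eq] using h 0
  | succ q ih =>
    intro α₀ hα₀
    obtain ⟨B, hBs, hBcard⟩ := exists_subset_card_eq (min_le_right (n - 1) (s.erase α₀).card)
    have hα₀B : α₀ ∉ B := fun h => by simpa using hBs h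
    have hinsert : (insert α₀ B).card ≤ n := by
      rw [card_insert_of_notMem hα₀B]
      omega
    obtain ⟨v, hv₀, hvB⟩ := exists_apply_eq_one_of_linearIndepOn φ (hgen _ hinsert)
      (mem_insert_self α₀ B)
    have hsdiff : (s \ B).card ≤ q * (n - 1) + 1 := by
      rw [card_sdiff_of_subset (hBs.trans (erase_subset α₀ s)), hBcard, card_erase_of_mem hα₀]
      have : (q + 1) * (n - 1) = q * (n - 1) + (n - 1) := by ring
      omega
    have hrel : ∀ x, ∑ α ∈ s \ B, g α * ((q + 1) * φ α v) * φ α x ^ q = 0 := fun x => by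
      rw [← sum_mul_pow_eq_zero_of_sum_mul_pow_succ_eq_zero φ s g h v x]
      refine sum_subset sdiff_subset fun β hβ hβsB => ?_
      have hβB : β ∈ B := by simpa [hβ] using hβsB
      rw [hvB β (mem_insert_of_mem hβB) (ne_of_mem_of_not_mem hβB hα₀B), mul_zero, mul_zero,
        zero_mul]
    have := ih hsdiff hrel α₀ (mem_sdiff.mpr ⟨hα₀, hα₀B⟩)
    simpa [hv₀, Nat.cast_add_one_ne_zero] using this

theorem linearIndepOn_pow {n : ℕ} (hn : 1 ≤ n) (φ : ι → Module.Dual 𝕜 V)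
    (hgen : ∀ s : Finset ι, s.card ≤ n → LinearIndepOn 𝕜 φ s) (q : ℕ) {s : Finset ι}
    (hs : s.card ≤ q * (n - 1) + 1) :
    LinearIndepOn 𝕜 (fun α x => φ α x ^ q) s :=
  linearIndepOn_finset_iff.mpr fun g hg =>
    eq_zero_of_sum_mul_pow_eq_zero hn φ hgen hs fun x => by simpa using congr_fun hg x

end PowersOfLinearForms

theorem stmt1_general (n d : ℕ) (hn : 2 ≤ n)
    (l : Fin d → ((Fin n → ℂ) →ₗ[ℂ] ℂ))
    (hgen : ∀ s : Finset (Fin d), s.card ≤ n →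
      LinearIndependent ℂ (fun α : s => l α))
    (r : ℕ → ℕ)
    (hr : ∀ q : ℕ, r q = Module.finrank ℂ
      (Submodule.span ℂ (Set.range fun α : Fin d => fun x : Fin n → ℂ => (l α x) ^ q))) :
    ∀ q : ℕ, min d (q * (n - 1) + 1) ≤ r q := by
  intro q
  rw [hr q]
  simpa using min_card_le_finrank_span fun s hs =>
    linearIndepOn_pow (by omega) l hgen q hs

/-- For linear forms in general position on ℂ^n (n ≥ 2),
the rank r_q of the span of the q-th powers satisfies r_q ≥ min(d, q(n-1)+1). -/
theorem stmt1 (n d : ℕ) (hn : 2 ≤ n) (hd : 1 ≤ d)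
    (l : Fin d → ((Fin n → ℂ) →ₗ[ℂ] ℂ))
    (hgen : ∀ s : Finset (Fin d), s.card ≤ n →
      LinearIndependent ℂ (fun α : s => l α))
    (r : ℕ → ℕ)
    (hr : ∀ q : ℕ, r q = Module.finrank ℂ
      (Submodule.span ℂ (Set.range fun α : Fin d => fun x : Fin n → ℂ => (l α x) ^ q))) :
    ∀ q : ℕ, min d (q * (n - 1) + 1) ≤ r q :=
  stmt1_general n d hn l hgen r hr
end

section
/- Let $\theta_1,\dots,\theta_d\in\mathbb{C}$ be pairwise distinct, and for each $\alpha$ let $l_\alpha(x)=\sum_{\mu=0}^{n-1}\theta_\alpha^{\mu}x_\mu$ be a linear form on $\mathbb{C}^n$ ($n\ge 2$). Then for every $q\ge 0$, the dimension of the span of $l_1^q,\dots,l_d^q$ equals $\min(d,\, q(n-1)+1)$. -/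
/-!
Expanding in `t`, `l(t,x)^q = ∑_{j ≤ q(n-1)} t^j c_j(x)`, so each `l_α^q` is the combination
`∑_j θ_α^j c_j` of the fixed functions `c_j`, with Vandermonde coefficients. The `c_j` are
linearly independent: at the point `x` with `l(t,x) = (1 + u t)^(n-1)` they take the values
`binom(q(n-1), j) u^j`, and letting `u` run over `q(n-1)+1` distinct values gives an invertible
Vandermonde system. The dimension is therefore the rank of the `d × (q(n-1)+1)` Vandermonde
matrix of the distinct nodes `θ_α`, namely `min(d, q(n-1)+1)`.
-/

open Polynomial Finset

section Vandermonde

variable {K M : Type*} [Field K] [AddCommGroup M] [Module K M] {N : ℕ} {c : Fin N → M}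

lemma linearIndependent_sum_pow_smul {d : ℕ} (hdN : d ≤ N) {θ : Fin d → K}
    (hθ : Function.Injective θ) (hc : LinearIndependent K c) :
    LinearIndependent K fun α => ∑ j : Fin N, θ α ^ (j : ℕ) • c j := by
  rw [Fintype.linearIndependent_iff]
  intro g hg
  simp only [Finset.smul_sum, smul_smul] at hg
  rw [Finset.sum_comm] at hg
  simp only [← Finset.sum_smul] at hg
  have hcoeff := Fintype.linearIndependent_iff.mp hc _ hg
  exact congrFun (Matrix.eq_zero_of_forall_pow_sum_mul_pow_eq_zero hθ fun i =>
    hcoeff (Fin.castLE hdN i))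

lemma finrank_span_range_sum_pow_smul {d : ℕ} {θ : Fin d → K} (hθ : Function.Injective θ)
    (hc : LinearIndependent K c) :
    Module.finrank K (Submodule.span K (Set.range fun α => ∑ j : Fin N, θ α ^ (j : ℕ) • c j)) =
      min d N := by
  set f := fun α => ∑ j : Fin N, θ α ^ (j : ℕ) • c j
  have hle_d : Module.finrank K (Submodule.span K (Set.range f)) ≤ d := by
    simpa [Set.finrank] using finrank_range_le_card (R := K) f
  have hle_N : Module.finrank K (Submodule.span K (Set.range f)) ≤ N := by
    have hspan : Submodule.span K (Set.range f) ≤ Submodule.span K (Set.range c) :=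
      Submodule.span_le.mpr <| Set.range_subset_iff.mpr fun α =>
        Submodule.sum_mem _ fun j _ => Submodule.smul_mem _ _ (Submodule.subset_span ⟨j, rfl⟩)
    have := FiniteDimensional.span_of_finite K (Set.finite_range c)
    simpa [finrank_span_eq_card hc] using Submodule.finrank_mono hspan
  have hmd : min d N ≤ d := min_le_left d N
  have hind := linearIndependent_sum_pow_smul (min_le_right d N)
    (hθ.comp (Fin.castLE_injective hmd)) hc
  have hge : min d N ≤ Module.finrank K (Submodule.span K (Set.range f)) := by
    have := FiniteDimensional.span_of_finite K (Set.finite_range f)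
    have hcard : Module.finrank K (Submodule.span K (Set.range (f ∘ Fin.castLE hmd))) = min d N :=
      (finrank_span_eq_card hind).trans (Fintype.card_fin _)
    exact hcard ▸ Submodule.finrank_mono
      (Submodule.span_mono (Set.range_comp_subset_range (Fin.castLE hmd) f))
  omega

end Vandermonde

noncomputable section

/-- The polynomial `t ↦ l(t, x)`. -/
def linearFormPoly {K : Type*} [Semiring K] {n : ℕ} (x : Fin n → K) : K[X] :=
  ∑ μ : Fin n, C (x μ) * X ^ (μ : ℕ)

def formPowCoeff {K : Type*} [Semiring K] {n : ℕ} (q j : ℕ) (x : Fin n → K) : K :=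
  (linearFormPoly x ^ q).coeff j

end

section CommSemiring

variable {K : Type*} [CommSemiring K] {n : ℕ}

lemma eval_linearFormPoly (t : K) (x : Fin n → K) :
    (linearFormPoly x).eval t = ∑ μ : Fin n, t ^ (μ : ℕ) * x μ := by
  simp only [linearFormPoly, eval_finsetSum, eval_mul, eval_C, eval_pow, eval_X, mul_comm]

lemma natDegree_linearFormPoly_le (x : Fin n → K) : (linearFormPoly x).natDegree ≤ n - 1 :=
  natDegree_sum_le_of_forall_le _ _ fun μ _ => (natDegree_C_mul_X_pow_le _ _).trans (by omega)

lemma linearFormPoly_coeff {p : K[X]} (hp : p.natDegree < n) :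
    linearFormPoly (fun μ : Fin n => p.coeff μ) = p := by
  conv_rhs => rw [p.as_sum_range' n hp,
    ← Fin.sum_univ_eq_sum_range (fun μ => monomial μ (p.coeff μ))]
  simp only [linearFormPoly, C_mul_X_pow_eq_monomial]

lemma linearForm_pow_eq_sum (q : ℕ) (t : K) (x : Fin n → K) :
    (∑ μ : Fin n, t ^ (μ : ℕ) * x μ) ^ q =
      ∑ j : Fin (q * (n - 1) + 1), t ^ (j : ℕ) * formPowCoeff q j x := by
  have hdeg : (linearFormPoly x ^ q).natDegree < q * (n - 1) + 1 :=
    Nat.lt_succ_of_le (natDegree_pow_le_of_le q (natDegree_linearFormPoly_le x))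
  rw [← eval_linearFormPoly, ← eval_pow, eval_eq_sum_range' hdeg,
    Fin.sum_univ_eq_sum_range (fun j => t ^ j * formPowCoeff q j x)]
  simp only [formPowCoeff, mul_comm]

end CommSemiring

section Field

variable {K : Type*} [Field K] {n : ℕ}

lemma formPowCoeff_binomial (hn : 1 ≤ n) (q j : ℕ) (u : K) :
    formPowCoeff q j (fun μ : Fin n => ((1 + C u * X) ^ (n - 1)).coeff μ) =
      u ^ j * (q * (n - 1)).choose j := by
  have hdeg : ((1 + C u * X) ^ (n - 1)).natDegree < n := by
    have : ((1 + C u * X) ^ (n - 1)).natDegree ≤ n - 1 := by compute_degree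
    omega
  have hcomp : (1 + C u * X : K[X]) = (1 + X).comp (C u * X) := by simp
  rw [formPowCoeff, linearFormPoly_coeff hdeg, ← pow_mul, hcomp, ← pow_comp, comp_C_mul_X_coeff,
    coeff_one_add_X_pow, mul_comm, mul_comm (n - 1)]

lemma linearIndependent_formPowCoeff [CharZero K] (hn : 1 ≤ n) (q : ℕ) :
    LinearIndependent K fun j : Fin (q * (n - 1) + 1) => (formPowCoeff q j : (Fin n → K) → K) := by
  rw [Fintype.linearIndependent_iff]
  intro h hh
  have hchoose : (fun j : Fin (q * (n - 1) + 1) => h j * (q * (n - 1)).choose j) = 0 := by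
    refine Matrix.eq_zero_of_forall_index_sum_mul_pow_eq_zero (f := fun i => (i : K))
      (Nat.cast_injective.comp Fin.val_injective) fun i => ?_
    have := congrFun hh fun μ : Fin n => ((1 + C (i : K) * X) ^ (n - 1)).coeff μ
    simp only [Finset.sum_apply, Pi.smul_apply, smul_eq_mul, Pi.zero_apply,
      formPowCoeff_binomial hn] at this
    rw [← this]
    exact Finset.sum_congr rfl fun j _ => by ring
  intro j
  have hchoose_ne : ((q * (n - 1)).choose j : K) ≠ 0 := by
    exact_mod_cast (Nat.choose_pos (Nat.lt_succ_iff.mp j.2)).ne'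
  simpa [hchoose_ne] using congrFun hchoose j

end Field

/-- For the linear forms l_α(x) = ∑_μ θ_α^μ x_μ with pairwise distinct θ_α,
the dimension of the span of the q-th powers equals min(d, q(n-1)+1). -/
theorem stmt4 (n d : ℕ) (hn : 2 ≤ n) (θ : Fin d → ℂ) (hθ : Function.Injective θ) :
    ∀ q : ℕ, Module.finrank ℂ
      (Submodule.span ℂ (Set.range fun α : Fin d =>
        fun x : Fin n → ℂ => (∑ μ : Fin n, θ α ^ (μ : ℕ) * x μ) ^ q))
      = min d (q * (n - 1) + 1) := by
  intro q
  have hfamily : (fun α : Fin d => fun x : Fin n → ℂ => (∑ μ : Fin n, θ α ^ (μ : ℕ) * x μ) ^ q) =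
      fun α => ∑ j : Fin (q * (n - 1) + 1), θ α ^ (j : ℕ) • formPowCoeff q j := by
    funext α x
    simp only [linearForm_pow_eq_sum, Finset.sum_apply, Pi.smul_apply, smul_eq_mul]
  rw [hfamily]
  exact finrank_span_range_sum_pow_smul hθ (linearIndependent_formPowCoeff (by omega) q)
end

section
/- Let $m\ge 2$ and $d\le 2m+1$, and let $p_1,\dots,p_d$ be points of $\mathbb{P}^m$ in general position. Then the evaluation map from the space of quadratic forms on $\mathbb{C}^{m+1}$ to $\mathbb{C}^d$, sending $Q$ to $(Q(v_1),\dots,Q(v_d))$ for chosen representative vectors $v_i$, is surjective; equivalently, the subspace of quadrics vanishing at all $d$ points has codimension exactly $d$ in the space $\mathcal{O}_{m+1}(2)$ of quadratic forms. -/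
/-!
Castelnuovo's argument. Fix a point `p_i`; the at most `2m` other points split into two groups
of at most `m`. Each group together with `p_i` is linearly independent, so some hyperplane contains
the group but not `p_i`. The product of the two linear forms is a quadric through every point except
`p_i`, and the values of these `d` quadrics span `ℂ^d`.
-/

open Module Finset

theorem exists_dual_apply_ne_zero_of_linearIndepOn_insert {K V ι : Type*} [Field K]
    [AddCommGroup V] [Module K V] {v : ι → V} {i : ι} {s : Set ι} (hi : i ∉ s)
    (hv : LinearIndepOn K v (insert i s)) :
    ∃ f : Dual K V, f (v i) ≠ 0 ∧ ∀ j ∈ s, f (v j) = 0 := by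
  have hspan : v i ∉ Submodule.span K (v '' s) := ((linearIndepOn_insert hi).1 hv).2
  obtain ⟨f, hfi, hf⟩ := Submodule.exists_dual_map_eq_bot_of_notMem hspan inferInstance
  refine ⟨f, hfi, fun j hj => ?_⟩
  have hfvj : f (v j) ∈ (Submodule.span K (v '' s)).map f :=
    Submodule.mem_map_of_mem (Submodule.subset_span ⟨j, hj, rfl⟩)
  simpa [hf] using hfvj

theorem Finset.exists_subset_card_le_card_sdiff_le {α : Type*} [DecidableEq α] {s : Finset α}
    {m : ℕ} (hs : #s ≤ 2 * m) : ∃ t ⊆ s, #t ≤ m ∧ #(s \ t) ≤ m := by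
  obtain ⟨t, hts, ht⟩ := Finset.exists_subset_card_eq (min_le_left #s m)
  refine ⟨t, hts, ht ▸ min_le_right _ _, ?_⟩
  rw [Finset.card_sdiff_of_subset hts, ht]
  omega

theorem exists_quadraticForm_apply_ne_zero_and_eq_zero_of_ne {K V ι : Type*} [Field K]
    [AddCommGroup V] [Module K V] [Fintype ι] [DecidableEq ι] {m : ℕ}
    (hcard : Fintype.card ι ≤ 2 * m + 1) {v : ι → V}
    (hv : ∀ s : Finset ι, #s ≤ m + 1 → LinearIndepOn K v s) (i : ι) :
    ∃ Q : QuadraticForm K V, Q (v i) ≠ 0 ∧ ∀ j ≠ i, Q (v j) = 0 := by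
  have hothers : #(univ.erase i) ≤ 2 * m := by
    rw [card_erase_of_mem (mem_univ i), card_univ]; omega
  obtain ⟨A, hA, hAcard, hBcard⟩ := exists_subset_card_le_card_sdiff_le hothers
  have hyperplane : ∀ T ⊆ univ.erase i, #T ≤ m →
      ∃ f : Dual K V, f (v i) ≠ 0 ∧ ∀ j ∈ T, f (v j) = 0 := fun T hT hTcard => by
    have hiT : i ∉ T := fun h => notMem_erase i _ (hT h)
    refine exists_dual_apply_ne_zero_of_linearIndepOn_insert (s := (T : Set ι)) (mod_cast hiT) ?_
    simpa using hv (insert i T) ((card_insert_of_notMem hiT).trans_le (by omega))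
  obtain ⟨f, hfi, hf⟩ := hyperplane A hA hAcard
  obtain ⟨g, hgi, hg⟩ := hyperplane _ sdiff_subset hBcard
  refine ⟨QuadraticMap.linMulLin f g, by simp [hfi, hgi], fun j hj => ?_⟩
  by_cases hjA : j ∈ A
  · simp [hf j hjA]
  · simp [hg j (mem_sdiff.2 ⟨mem_erase.2 ⟨hj, mem_univ j⟩, hjA⟩)]

theorem LinearMap.surjective_of_forall_exists_apply_ne_zero {K M ι : Type*} [Field K]
    [AddCommGroup M] [Module K M] [Finite ι] (e : M →ₗ[K] ι → K)
    (h : ∀ i, ∃ x, e x i ≠ 0 ∧ ∀ j ≠ i, e x j = 0) : Function.Surjective e := by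
  classical
  rw [← LinearMap.range_eq_top, eq_top_iff, ← (Pi.basisFun K ι).span_eq, Submodule.span_le]
  rintro _ ⟨i, rfl⟩
  obtain ⟨x, hxi, hx⟩ := h i
  refine ⟨(e x i)⁻¹ • x, funext fun j => ?_⟩
  rcases eq_or_ne j i with rfl | hji
  · simp [hxi]
  · simp [hx j hji, hji]

theorem stmt8_general (m d : ℕ) (hd : d ≤ 2 * m + 1)
    (v : Fin d → (Fin (m + 1) → ℂ))
    (hgen : ∀ s : Finset (Fin d), s.card ≤ m + 1 →
      LinearIndependent ℂ (fun i : s => v i)) :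
    Function.Surjective
      (fun Q : QuadraticForm ℂ (Fin (m + 1) → ℂ) => fun i : Fin d => Q (v i)) := by
  let eval : QuadraticForm ℂ (Fin (m + 1) → ℂ) →ₗ[ℂ] Fin d → ℂ :=
    { toFun Q i := Q (v i), map_add' _ _ := rfl, map_smul' _ _ := rfl }
  refine eval.surjective_of_forall_exists_apply_ne_zero fun i => ?_
  exact exists_quadraticForm_apply_ne_zero_and_eq_zero_of_ne
    (by rwa [Fintype.card_fin]) hgen i

/-- d ≤ 2m+1 points of ℙ^m in general position impose d independent conditions
on quadrics: the evaluation map from quadratic forms to ℂ^d is surjective. -/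
theorem stmt8 (m d : ℕ) (hm : 2 ≤ m) (hd : d ≤ 2 * m + 1)
    (v : Fin d → (Fin (m + 1) → ℂ))
    (hgen : ∀ s : Finset (Fin d), s.card ≤ m + 1 →
      LinearIndependent ℂ (fun i : s => v i)) :
    Function.Surjective
      (fun Q : QuadraticForm ℂ (Fin (m + 1) → ℂ) => fun i : Fin d => Q (v i)) :=
  stmt8_general m d hd v hgen
end

section
/- Let $n\ge 2$, $d\ge 2n-1$, and let $l_1,\dots,l_d$ be linear forms on $\mathbb{C}^n$ in general position. Let $B$ be a matrix whose rows form a basis of the solution space of $\sum_{\alpha=1}^d b_\alpha l_\alpha^2 = 0$ (of dimension $d - r_2$, where $r_2=\min(d,2n-1)=2n-1$, so $B$ has size $(d-2n+1)\times d$). Then every $(d-2n+1)\times(d-2n+1)$ submatrix of $B$ is invertible. -/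
/-!
Multiplying a vanishing square submatrix of `B` on the left by a nonzero vector gives a nonzero
`b` in the row space of `B`, i.e. a relation `∑ b_α l_α² = 0`, whose support avoids `d - 2n + 1`
indices and so has at most `2n - 1` elements. Such a relation is trivial (Lemma 2.1): polarizing
gives `∑ b_α l_α(x) l_α(y) = 0` for all `x, y`; for `β` in the support, split the rest of the
support into two sets of at most `n - 1` indices, and by general position choose `x` killing the
first and `y` killing the second but not `l_β`; then only the term `b_β l_β(x) l_β(y)` survives.
-/

open Finset Submodule

theorem Matrix.linearIndependent_col_of_row {K m n : Type*} [Field K] [Fintype m] [Fintype n]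
    {A : Matrix m n K} (hcard : Fintype.card m = Fintype.card n)
    (h : LinearIndependent K A.row) : LinearIndependent K A.col := by
  rw [linearIndependent_iff_card_eq_finrank_span, Set.finrank, ← Matrix.rank_eq_finrank_span_cols,
    h.rank_matrix, hcard]

theorem LinearIndependent.restrict_of_forall_eqOn_zero {K ι κ : Type*} [Ring K] {v : κ → ι → K}
    (hv : LinearIndependent K v) (s : Set ι)
    (hs : ∀ b ∈ span K (Set.range v), Set.EqOn b 0 s → b = 0) :
    LinearIndependent K fun i (α : s) => v i α :=
  hv.map (f := LinearMap.funLeft K K ((↑) : s → ι)) <| disjoint_def.2 fun b hb hker =>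
    hs b hb fun α hα => congr_fun (LinearMap.mem_ker.1 hker) ⟨α, hα⟩

theorem LinearIndependent.exists_apply_ne_zero_and_forall_ne_apply_eq_zero {K V ι : Type*}
    [Field K] [AddCommGroup V] [Module K V] [Finite ι] {l : ι → Module.Dual K V}
    (hl : LinearIndependent K l) (i : ι) : ∃ x, l i x ≠ 0 ∧ ∀ j ≠ i, l j x = 0 := by
  have hker : ¬ ⨅ j : {j // j ≠ i}, LinearMap.ker (l j) ≤ LinearMap.ker (l i) := fun hle => by
    have hspan := mem_span_of_iInf_ker_le_ker hle
    rw [Set.range_comp' l Subtype.val, Subtype.range_coe_subtype] at hspan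
    exact hl.notMem_span_image (by simp) hspan
  obtain ⟨x, hx, hix⟩ := SetLike.not_le_iff_exists.1 hker
  exact ⟨x, hix, fun j hj => (mem_iInf _).1 hx ⟨j, hj⟩⟩

theorem sum_mul_apply_mul_apply_eq_zero {K V ι : Type*} [Field K] [NeZero (2 : K)]
    [AddCommGroup V] [Module K V] [Fintype ι] {l : ι → Module.Dual K V} {b : ι → K}
    (hb : ∀ x, ∑ α, b α * l α x ^ 2 = 0) (x y : V) :
    ∑ α, b α * l α x * l α y = 0 := by
  have polarization : 2 * ∑ α, b α * l α x * l α y =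
      ∑ α, b α * l α (x + y) ^ 2 - ∑ α, b α * l α x ^ 2 - ∑ α, b α * l α y ^ 2 := by
    simp only [← sum_sub_distrib, mul_sum, map_add]
    exact sum_congr rfl fun _ _ => by ring
  rw [hb, hb, hb, sub_zero, sub_zero] at polarization
  exact (mul_eq_zero.1 polarization).resolve_left two_ne_zero

theorem eq_zero_of_sum_mul_sq_eq_zero {K V ι : Type*} [Field K] [DecidableEq K] [NeZero (2 : K)]
    [AddCommGroup V] [Module K V] [Fintype ι] {n : ℕ} {l : ι → Module.Dual K V}
    (hgen : ∀ s : Finset ι, s.card ≤ n → LinearIndependent K fun α : s => l α)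
    {b : ι → K} (hb : ∀ x, ∑ α, b α * l α x ^ 2 = 0)
    (hsupp : #{α | b α ≠ 0} ≤ 2 * n - 1) : b = 0 := by
  classical
  funext β
  by_contra hβ
  set S : Finset ι := {α | b α ≠ 0}
  have hβS : β ∈ S := mem_filter.2 ⟨mem_univ β, hβ⟩
  have hcard : (S.erase β).card + 1 ≤ 2 * n - 1 := card_erase_add_one hβS ▸ hsupp
  have separate : ∀ U ⊆ S.erase β, U.card ≤ n - 1 → ∃ x, l β x ≠ 0 ∧ ∀ α ∈ U, l α x = 0 := by
    intro U hU hUcard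
    have hβU : β ∉ U := fun h => S.notMem_erase β (hU h)
    obtain ⟨x, hx, hUx⟩ := (hgen (insert β U) (by rw [card_insert_of_notMem hβU]; omega))
      |>.exists_apply_ne_zero_and_forall_ne_apply_eq_zero ⟨β, mem_insert_self β U⟩
    exact ⟨x, hx, fun α hα => hUx ⟨α, mem_insert_of_mem hα⟩ (by rintro ⟨⟩; exact hβU hα)⟩
  obtain ⟨T, hTsub, hTcard⟩ := (S.erase β).exists_subset_card_eq (min_le_left _ (n - 1))
  obtain ⟨x, hx, hxT⟩ := separate T hTsub (hTcard ▸ min_le_right _ _)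
  obtain ⟨y, hy, hyT⟩ := separate (S.erase β \ T) sdiff_subset
    (by rw [card_sdiff_of_subset hTsub]; omega)
  have hxy := sum_mul_apply_mul_apply_eq_zero hb x y
  rw [sum_eq_single β _ (by simp)] at hxy
  · exact mul_ne_zero (mul_ne_zero hβ hx) hy hxy
  intro α _ hαβ
  by_cases hαS : α ∈ S
  · by_cases hαT : α ∈ T
    · simp [hxT α hαT]
    · simp [hyT α (mem_sdiff.2 ⟨mem_erase.2 ⟨hαβ, hαS⟩, hαT⟩)]
  · simp only [S, mem_filter, mem_univ, true_and, not_not] at hαS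
    simp [hαS]

theorem stmt18_general (n d : ℕ)
    (l : Fin d → ((Fin n → ℂ) →ₗ[ℂ] ℂ))
    (hgen : ∀ s : Finset (Fin d), s.card ≤ n →
      LinearIndependent ℂ (fun α : s => l α))
    (B : Matrix (Fin (d - (2 * n - 1))) (Fin d) ℂ)
    (hindep : LinearIndependent ℂ (fun i => B i))
    (hsol : ∀ b : Fin d → ℂ,
      ((fun x : Fin n → ℂ => ∑ α, b α * (l α x) ^ 2) = 0) ↔
        b ∈ Submodule.span ℂ (Set.range fun i => B i)) :
    ∀ s : Finset (Fin d), s.card = d - (2 * n - 1) →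
      LinearIndependent ℂ (fun α : s => fun i : Fin (d - (2 * n - 1)) => B i α) := by
  intro s hs
  refine Matrix.linearIndependent_col_of_row (A := Matrix.of fun i (α : s) => B i α)
    (by simp [hs]) ?_
  refine hindep.restrict_of_forall_eqOn_zero s fun b hb hbs =>
    eq_zero_of_sum_mul_sq_eq_zero hgen (congr_fun ((hsol b).2 hb)) ?_
  calc #{α | b α ≠ 0} ≤ #sᶜ := card_le_card fun α hα => mem_compl.2 fun hαs =>
        (mem_filter.1 hα).2 (hbs hαs)
    _ ≤ 2 * n - 1 := by rw [card_compl, Fintype.card_fin, hs]; omega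

/-- If the rows of B form a basis of the solution space of ∑ b_α l_α² = 0 for
linear forms l_α in general position on ℂ^n (d ≥ 2n-1, the solution space having dimension
d-(2n-1)), then every (d-2n+1)×(d-2n+1) submatrix of B is invertible. -/
theorem stmt18 (n d : ℕ) (hn : 2 ≤ n) (hd : 2 * n - 1 ≤ d)
    (l : Fin d → ((Fin n → ℂ) →ₗ[ℂ] ℂ))
    (hgen : ∀ s : Finset (Fin d), s.card ≤ n →
      LinearIndependent ℂ (fun α : s => l α))
    (B : Matrix (Fin (d - (2 * n - 1))) (Fin d) ℂ)
    (hindep : LinearIndependent ℂ (fun i => B i))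
    (hsol : ∀ b : Fin d → ℂ,
      ((fun x : Fin n → ℂ => ∑ α, b α * (l α x) ^ 2) = 0) ↔
        b ∈ Submodule.span ℂ (Set.range fun i => B i)) :
    ∀ s : Finset (Fin d), s.card = d - (2 * n - 1) →
      LinearIndependent ℂ (fun α : s => fun i : Fin (d - (2 * n - 1)) => B i α) :=
  stmt18_general n d l hgen B hindep hsol
end
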